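/- Fix π_A ∈ (0,1), μ_A > 0 and μ_N < 0, let G(x) = (1−π_A)·Φ(Φ⁻¹(x)+μ_N) + π_A·Φ(Φ⁻¹(x)+μ_A) for x ∈ (0,1) with G(0)=0 and G(1)=1, and let c* ∈ (0,1) be the unique interior zero of J(x) = x − G(x). Then for every λ ∈ [0, c*) and every τ ∈ (c*, 1] with τ − λ < 1, one has τ − λ > G(τ) − G(λ); equivalently, C(λ,τ) := (τ−λ)/(G(τ)−G(λ)) > 1. -/

import Mathlib

open MeasureTheory ProbabilityTheory

/-- The standard normal CDF `Φ`. -/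
noncomputable def stdNormalCDF (x : ℝ) : ℝ :=
  (ProbabilityTheory.gaussianReal 0 1 (Set.Iic x)).toReal

/-- The inverse `Φ⁻¹` of the standard normal CDF (on `(0,1)`). -/
noncomputable def stdNormalQuantile : ℝ → ℝ :=
  Function.invFun stdNormalCDF

/-!
In the quantile scale `x = Φ q` the function `J x = x - G x` becomes `Φ q - mixtureCDF q`,
which is continuous in `q`. As `q → -∞` it is negative: the mass the null component removes is
negligible against the mass the alternative component adds, because
`φ (q + d) / φ q = exp (-d q - d² / 2) → ∞`. By the symmetry of `Φ` it is positive as `q → ∞`.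
Its zeros all sit at `Φ q = c`, so by the intermediate value theorem `J < 0` on `(0, c)` and
`J > 0` on `(c, 1)`. Together with `J 0 = J 1 = 0` and `τ - λ < 1` this gives `J τ > J λ`,
i.e. `G τ - G λ < τ - λ`, and `G τ - G λ > 0` because `G` is strictly increasing on `[0, 1]`.
-/

open Set Filter

local notation "Φ" => stdNormalCDF
local notation "φ" => gaussianPDFReal 0 1

section StdNormal

lemma stdNormalCDF_eq_cdf : Φ = cdf (gaussianReal 0 1) := by
  funext x
  rw [stdNormalCDF, cdf_eq_real, measureReal_def]

lemma stdNormalCDF_sub_eq_integral (a b : ℝ) : Φ b - Φ a = ∫ t in a..b, φ t := by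
  have h (x : ℝ) : Φ x = ∫ t in Iic x, φ t := by
    rw [stdNormalCDF, gaussianReal_apply_eq_integral 0 one_ne_zero, ENNReal.toReal_ofReal]
    exact setIntegral_nonneg measurableSet_Iic fun t _ => gaussianPDFReal_nonneg 0 1 t
  rw [h, h]
  exact intervalIntegral.integral_Iic_sub_Iic (integrable_gaussianPDFReal 0 1).integrableOn
    (integrable_gaussianPDFReal 0 1).integrableOn

lemma continuous_stdNormalCDF : Continuous Φ := by
  have h : Φ = fun x => Φ 0 + ∫ t in (0 : ℝ)..x, φ t := by
    funext x
    rw [← stdNormalCDF_sub_eq_integral]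
    ring
  rw [h]
  exact continuous_const.add <| intervalIntegral.continuous_primitive
    (fun a b => (integrable_gaussianPDFReal 0 1).intervalIntegrable) 0

lemma stdNormalCDF_strictMono : StrictMono Φ := by
  intro a b hab
  rw [← sub_pos, stdNormalCDF_sub_eq_integral]
  exact intervalIntegral.intervalIntegral_pos_of_pos_on
    (integrable_gaussianPDFReal 0 1).intervalIntegrable
    (fun t _ => gaussianPDFReal_pos 0 1 t one_ne_zero) hab

lemma stdNormalCDF_mem_Ioo (q : ℝ) : Φ q ∈ Ioo 0 1 := by
  have hlt := stdNormalCDF_strictMono (show q - 1 < q by linarith)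
  have hgt := stdNormalCDF_strictMono (show q < q + 1 by linarith)
  rw [stdNormalCDF_eq_cdf] at *
  exact ⟨(cdf_nonneg _ _).trans_lt hlt, hgt.trans_le (cdf_le_one _ _)⟩

lemma exists_stdNormalCDF_eq {x : ℝ} (hx : x ∈ Ioo 0 1) : ∃ q, Φ q = x := by
  rw [stdNormalCDF_eq_cdf]
  refine mem_range_of_exists_le_of_exists_ge (stdNormalCDF_eq_cdf ▸ continuous_stdNormalCDF)
    ?_ ?_
  · exact ((tendsto_cdf_atBot _).eventually (eventually_le_nhds hx.1)).exists
  · exact ((tendsto_cdf_atTop _).eventually (eventually_ge_nhds hx.2)).exists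

lemma stdNormalQuantile_stdNormalCDF (q : ℝ) : stdNormalQuantile (Φ q) = q :=
  Function.leftInverse_invFun stdNormalCDF_strictMono.injective q

lemma stdNormalCDF_neg_sub_neg (a b : ℝ) : Φ (-a) - Φ (-b) = Φ b - Φ a := by
  rw [stdNormalCDF_sub_eq_integral, stdNormalCDF_sub_eq_integral,
    ← intervalIntegral.integral_comp_neg]
  simp only [gaussianPDFReal, sub_zero, neg_sq]

lemma gaussianPDFReal_add_eq_mul_exp (q d : ℝ) :
    φ (q + d) = φ q * Real.exp (-d * q - d ^ 2 / 2) := by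
  simp only [gaussianPDFReal, NNReal.coe_one, mul_one, mul_assoc, ← Real.exp_add]
  ring_nf

lemma gaussianPDFReal_le_of_le_nonpos {s t : ℝ} (hst : s ≤ t) (ht : t ≤ 0) :
    φ s ≤ φ t := by
  simp only [gaussianPDFReal, NNReal.coe_one, sub_zero]
  gcongr ?_ * Real.exp ?_
  nlinarith

end StdNormal

section Tails

lemma stdNormalCDF_sub_le_of_nonpos {a b : ℝ} (hab : a ≤ b) (hb : b ≤ 0) :
    Φ b - Φ a ≤ (b - a) * φ b := by
  rw [stdNormalCDF_sub_eq_integral]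
  calc ∫ t in a..b, φ t ≤ ∫ _ in a..b, φ b :=
        intervalIntegral.integral_mono_on hab (integrable_gaussianPDFReal 0 1).intervalIntegrable
          intervalIntegrable_const fun t ht => gaussianPDFReal_le_of_le_nonpos ht.2 hb
    _ = (b - a) * φ b := by simp

lemma le_stdNormalCDF_sub_of_nonpos {a b : ℝ} (hab : a ≤ b) (hb : b ≤ 0) :
    (b - a) * φ a ≤ Φ b - Φ a := by
  rw [stdNormalCDF_sub_eq_integral]
  calc (b - a) * φ a = ∫ _ in a..b, φ a := by simp
    _ ≤ ∫ t in a..b, φ t :=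
        intervalIntegral.integral_mono_on hab intervalIntegrable_const
          (integrable_gaussianPDFReal 0 1).intervalIntegrable
          fun t ht => gaussianPDFReal_le_of_le_nonpos ht.1 (ht.2.trans hb)

/-- In the lower tail the mass of `[q - a, q]` is negligible against that of `[q, q + d]`, since
`φ (q + d / 2) / φ q = exp (-(d / 2) q - d² / 8) → ∞` as `q → -∞`. -/
lemma eventually_mul_sub_lt_sub_atBot {K a d : ℝ} (hK : 0 ≤ K) (ha : 0 ≤ a) (hd : 0 < d) :
    ∀ᶠ q in atBot, K * (Φ q - Φ (q - a)) < Φ (q + d) - Φ q := by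
  have hlin : Tendsto (fun q : ℝ => -(d / 2) * q - (d / 2) ^ 2 / 2) atBot atTop := by
    simpa [sub_eq_add_neg] using tendsto_atTop_add_const_right _ (-((d / 2) ^ 2 / 2))
      (tendsto_id.const_mul_atBot_of_neg (show -(d / 2) < 0 by linarith))
  filter_upwards [(Real.tendsto_exp_atTop.comp hlin).eventually_gt_atTop (2 * K * a / d),
    eventually_le_atBot (-d)] with q hexp hq
  have hleft : Φ q - Φ (q - a) ≤ a * φ q := by
    simpa using stdNormalCDF_sub_le_of_nonpos (a := q - a) (b := q) (by linarith) (by linarith)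
  have hright : d / 2 * φ (q + d / 2) ≤ Φ (q + d) - Φ (q + d / 2) := by
    have h := le_stdNormalCDF_sub_of_nonpos (a := q + d / 2) (b := q + d) (by linarith)
      (by linarith)
    rwa [show q + d - (q + d / 2) = d / 2 by ring] at h
  have hmid : Φ q ≤ Φ (q + d / 2) := stdNormalCDF_strictMono.monotone (by linarith)
  have hratio : K * a < d / 2 * Real.exp (-(d / 2) * q - (d / 2) ^ 2 / 2) := by
    rw [div_lt_iff₀ hd] at hexp
    simp only [Function.comp_apply] at hexp
    linarith
  have hφ : 0 < φ q := gaussianPDFReal_pos 0 1 q one_ne_zero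
  calc K * (Φ q - Φ (q - a)) ≤ K * a * φ q := by
        rw [mul_assoc]; exact mul_le_mul_of_nonneg_left hleft hK
    _ < d / 2 * φ (q + d / 2) := by
        rw [gaussianPDFReal_add_eq_mul_exp]
        linarith [mul_lt_mul_of_pos_right hratio hφ]
    _ ≤ Φ (q + d) - Φ q := by linarith

lemma eventually_mul_sub_lt_sub_atTop {K a d : ℝ} (hK : 0 ≤ K) (ha : 0 ≤ a) (hd : 0 < d) :
    ∀ᶠ q in atTop, K * (Φ (q + a) - Φ q) < Φ q - Φ (q - d) := by
  filter_upwards [tendsto_neg_atTop_atBot.eventually (eventually_mul_sub_lt_sub_atBot hK ha hd)]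
    with q hq
  have hleft : Φ (-q) - Φ (-q - a) = Φ (q + a) - Φ q := by
    rw [← stdNormalCDF_neg_sub_neg q (q + a), neg_add']
  have hright : Φ (-q + d) - Φ (-q) = Φ q - Φ (q - d) := by
    rw [← stdNormalCDF_neg_sub_neg (q - d) q]
    ring_nf
  rwa [hleft, hright] at hq

end Tails

lemma exists_le_eq_zero_of_eventually_neg {f : ℝ → ℝ} (hf : Continuous f)
    (hneg : ∀ᶠ x in atBot, f x < 0) {q : ℝ} (hq : 0 ≤ f q) : ∃ z ≤ q, f z = 0 := by
  obtain ⟨p, hpq, hp⟩ := ((eventually_le_atBot q).and hneg).exists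
  obtain ⟨z, hz, hz0⟩ := intermediate_value_Icc hpq hf.continuousOn ⟨hp.le, hq⟩
  exact ⟨z, hz.2, hz0⟩

lemma exists_ge_eq_zero_of_eventually_pos {f : ℝ → ℝ} (hf : Continuous f)
    (hpos : ∀ᶠ x in atTop, 0 < f x) {q : ℝ} (hq : f q ≤ 0) : ∃ z ≥ q, f z = 0 := by
  obtain ⟨p, hqp, hp⟩ := ((eventually_ge_atTop q).and hpos).exists
  obtain ⟨z, hz, hz0⟩ := intermediate_value_Icc hqp hf.continuousOn ⟨hq, hp.le⟩
  exact ⟨z, hz.1, hz0⟩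

/-- The p-value CDF `G` read in the quantile scale: `G (Φ q) = mixtureCDF πA μA μN q`. -/
noncomputable def mixtureCDF (πA μA μN q : ℝ) : ℝ :=
  (1 - πA) * Φ (q + μN) + πA * Φ (q + μA)

section Mixture

variable {πA μA μN : ℝ}

lemma continuous_mixtureCDF : Continuous (mixtureCDF πA μA μN) := by
  have := continuous_stdNormalCDF
  unfold mixtureCDF
  fun_prop

lemma mixtureCDF_strictMono (hπA : πA ∈ Ioo 0 1) : StrictMono (mixtureCDF πA μA μN) := by
  intro p q hpq
  have hN := stdNormalCDF_strictMono (show p + μN < q + μN by linarith)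
  have hA := stdNormalCDF_strictMono (show p + μA < q + μA by linarith)
  unfold mixtureCDF
  nlinarith [hπA.1, hπA.2]

lemma mixtureCDF_mem_Ioo (hπA : πA ∈ Ioo 0 1) (q : ℝ) :
    mixtureCDF πA μA μN q ∈ Ioo 0 1 := by
  obtain ⟨hN0, hN1⟩ := stdNormalCDF_mem_Ioo (q + μN)
  obtain ⟨hA0, hA1⟩ := stdNormalCDF_mem_Ioo (q + μA)
  unfold mixtureCDF
  constructor <;> nlinarith [hπA.1, hπA.2]

lemma eventually_sub_mixtureCDF_neg (hπA : πA ∈ Ioo 0 1) (hμA : 0 < μA) (hμN : μN < 0) :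
    ∀ᶠ q in atBot, Φ q - mixtureCDF πA μA μN q < 0 := by
  filter_upwards [eventually_mul_sub_lt_sub_atBot (K := (1 - πA) / πA)
    (div_nonneg (by linarith [hπA.2]) hπA.1.le) (neg_nonneg.2 hμN.le) hμA] with q hq
  rw [sub_neg_eq_add, div_mul_eq_mul_div, div_lt_iff₀ hπA.1] at hq
  unfold mixtureCDF
  linarith

lemma eventually_sub_mixtureCDF_pos (hπA : πA ∈ Ioo 0 1) (hμA : 0 < μA) (hμN : μN < 0) :
    ∀ᶠ q in atTop, 0 < Φ q - mixtureCDF πA μA μN q := by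
  filter_upwards [eventually_mul_sub_lt_sub_atTop (K := πA / (1 - πA))
    (div_nonneg hπA.1.le (by linarith [hπA.2])) hμA.le (neg_pos.2 hμN)] with q hq
  rw [sub_neg_eq_add, div_mul_eq_mul_div, div_lt_iff₀ (by linarith [hπA.2])] at hq
  unfold mixtureCDF
  linarith

variable {c : ℝ}

lemma sub_mixtureCDF_neg_of_lt (hπA : πA ∈ Ioo 0 1) (hμA : 0 < μA) (hμN : μN < 0)
    (hzero : ∀ z, Φ z - mixtureCDF πA μA μN z = 0 → Φ z = c) {q : ℝ} (hq : Φ q < c) :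
    Φ q - mixtureCDF πA μA μN q < 0 := by
  by_contra! h
  obtain ⟨z, hzq, hz⟩ := exists_le_eq_zero_of_eventually_neg
    (continuous_stdNormalCDF.sub continuous_mixtureCDF)
    (eventually_sub_mixtureCDF_neg hπA hμA hμN) h
  have := stdNormalCDF_strictMono.monotone hzq
  rw [hzero z hz] at this
  linarith

lemma sub_mixtureCDF_pos_of_gt (hπA : πA ∈ Ioo 0 1) (hμA : 0 < μA) (hμN : μN < 0)
    (hzero : ∀ z, Φ z - mixtureCDF πA μA μN z = 0 → Φ z = c) {q : ℝ} (hq : c < Φ q) :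
    0 < Φ q - mixtureCDF πA μA μN q := by
  by_contra! h
  obtain ⟨z, hqz, hz⟩ := exists_ge_eq_zero_of_eventually_pos
    (continuous_stdNormalCDF.sub continuous_mixtureCDF)
    (eventually_sub_mixtureCDF_pos hπA hμA hμN) h
  have := stdNormalCDF_strictMono.monotone hqz
  rw [hzero z hz] at this
  linarith

end Mixture

lemma strictMonoOn_Icc_of_comp_stdNormalCDF {G : ℝ → ℝ} (hG0 : G 0 = 0) (hG1 : G 1 = 1)
    (hmono : StrictMono (G ∘ Φ)) (hmem : ∀ q, G (Φ q) ∈ Ioo 0 1) :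
    StrictMonoOn G (Icc 0 1) := by
  rintro x ⟨hx0, -⟩ y ⟨-, hy1⟩ hxy
  rcases hy1.eq_or_lt with rfl | hy1
  · rcases hx0.eq_or_lt with rfl | hx0
    · simp [hG0, hG1]
    · obtain ⟨p, rfl⟩ := exists_stdNormalCDF_eq ⟨hx0, hxy⟩
      rw [hG1]
      exact (hmem p).2
  · obtain ⟨q, rfl⟩ := exists_stdNormalCDF_eq ⟨hx0.trans_lt hxy, hy1⟩
    rcases hx0.eq_or_lt with rfl | hx0
    · rw [hG0]
      exact (hmem q).1
    · obtain ⟨p, rfl⟩ := exists_stdNormalCDF_eq ⟨hx0, hxy.trans hy1⟩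
      exact hmono (stdNormalCDF_strictMono.lt_iff_lt.1 hxy)

theorem addis_parameter_condition_general
    (πA μA μN : ℝ) (hπA : πA ∈ Set.Ioo (0 : ℝ) 1) (hμA : 0 < μA) (hμN : μN < 0)
    (G : ℝ → ℝ)
    (hG : ∀ x ∈ Set.Ioo (0 : ℝ) 1,
      G x = (1 - πA) * stdNormalCDF (stdNormalQuantile x + μN) +
        πA * stdNormalCDF (stdNormalQuantile x + μA))
    (hG0 : G 0 = 0) (hG1 : G 1 = 1)
    (c : ℝ)
    (hcuniq : ∀ x ∈ Set.Ioo (0 : ℝ) 1, x - G x = 0 → x = c) :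
    ∀ lam ∈ Set.Ico (0 : ℝ) c, ∀ τ ∈ Set.Ioc c 1, τ - lam < 1 →
      G τ - G lam < τ - lam ∧ 1 < (τ - lam) / (G τ - G lam) := by
  rintro lam ⟨hlam0, hlamc⟩ τ ⟨hcτ, hτ1⟩ hlt
  have hGΦ (q : ℝ) : G (Φ q) = mixtureCDF πA μA μN q := by
    rw [hG _ (stdNormalCDF_mem_Ioo q), stdNormalQuantile_stdNormalCDF, mixtureCDF]
  have hzero (z : ℝ) (hz : Φ z - mixtureCDF πA μA μN z = 0) : Φ z = c :=
    hcuniq _ (stdNormalCDF_mem_Ioo z) (hGΦ z ▸ hz)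
  have hJneg (x : ℝ) (hx0 : 0 < x) (hxc : x < c) : x - G x < 0 := by
    obtain ⟨q, rfl⟩ := exists_stdNormalCDF_eq ⟨hx0, by linarith⟩
    exact hGΦ q ▸ sub_mixtureCDF_neg_of_lt hπA hμA hμN hzero hxc
  have hJpos (x : ℝ) (hcx : c < x) (hx1 : x < 1) : 0 < x - G x := by
    obtain ⟨q, rfl⟩ := exists_stdNormalCDF_eq ⟨by linarith, hx1⟩
    exact hGΦ q ▸ sub_mixtureCDF_pos_of_gt hπA hμA hμN hzero hcx
  have hlt_sub : G τ - G lam < τ - lam := by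
    rcases hlam0.eq_or_lt with rfl | hlam0
    · linarith [hJpos τ hcτ (by linarith)]
    · rcases hτ1.eq_or_lt with rfl | hτ1
      · linarith [hJneg lam hlam0 hlamc]
      · linarith [hJneg lam hlam0 hlamc, hJpos τ hcτ hτ1]
  have hGmono : StrictMonoOn G (Icc 0 1) :=
    strictMonoOn_Icc_of_comp_stdNormalCDF hG0 hG1
      (by simpa only [Function.comp_def, hGΦ] using mixtureCDF_strictMono hπA)
      (fun q => hGΦ q ▸ mixtureCDF_mem_Ioo hπA q)
  have hden : 0 < G τ - G lam :=
    sub_pos.2 (hGmono ⟨hlam0, by linarith⟩ ⟨by linarith, hτ1⟩ (hlamc.trans hcτ))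
  exact ⟨hlt_sub, (one_lt_div hden).2 hlt_sub⟩

/-- **Sufficient condition for ADDIS-Spending to beat Alpha-Spending.** With
`G(x) = (1−π_A)Φ(Φ⁻¹(x)+μ_N) + π_A Φ(Φ⁻¹(x)+μ_A)` on `(0,1)`, `G(0)=0`, `G(1)=1`, and `c*`
the unique interior zero of `J(x) = x − G(x)`, every `λ ∈ [0, c*)` and `τ ∈ (c*, 1]` with
`τ − λ < 1` satisfy `τ − λ > G(τ) − G(λ)`; equivalently `(τ−λ)/(G(τ)−G(λ)) > 1`. -/
theorem addis_parameter_condition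
    (πA μA μN : ℝ) (hπA : πA ∈ Set.Ioo (0 : ℝ) 1) (hμA : 0 < μA) (hμN : μN < 0)
    (G : ℝ → ℝ)
    (hG : ∀ x ∈ Set.Ioo (0 : ℝ) 1,
      G x = (1 - πA) * stdNormalCDF (stdNormalQuantile x + μN) +
        πA * stdNormalCDF (stdNormalQuantile x + μA))
    (hG0 : G 0 = 0) (hG1 : G 1 = 1)
    (c : ℝ) (hc : c ∈ Set.Ioo (0 : ℝ) 1) (hczero : c - G c = 0)
    (hcuniq : ∀ x ∈ Set.Ioo (0 : ℝ) 1, x - G x = 0 → x = c) :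
    ∀ lam ∈ Set.Ico (0 : ℝ) c, ∀ τ ∈ Set.Ioc c 1, τ - lam < 1 →
      G τ - G lam < τ - lam ∧ 1 < (τ - lam) / (G τ - G lam) :=
  addis_parameter_condition_general πA μA μN hπA hμA hμN G hG hG0 hG1 c hcuniq
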